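/- (Lemma 4, support of the block permutation probabilities) Assume (A1), (B1) and (B2) with constant r, and let α ∈ (0,1). Define μ_b(w) = P*( p^(b)(W) > c(α) )(w) for b = 1, …, B. Then for every w ∈ 𝒲 and every b, 1 − log(1/(1−α)) · r² · m_B / B ≤ μ_b(w) ≤ 1; in particular, the support of the distribution of μ_b(W) is contained in the interval [1 − log(1/(1−α)) r² m_B B^{-1}, 1]. -/

import Mathlib

open scoped ENNReal

noncomputable section

/-- A multiple-testing framework with `m` hypotheses: data space `Ω` with distribution `Q`,
`p`-values `p j` taking values in the finite set `S ⊆ [0,1]`, set of true nulls `I`,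
a finite group `G` of measurable bijections of the data space, and a partition
`A 1, …, A B` of the hypotheses into blocks, each containing a true null. -/
structure Framework (m : ℕ) where
  Ω : Type
  [meas : MeasurableSpace Ω]
  Q : MeasureTheory.Measure Ω
  Qprob : MeasureTheory.IsProbabilityMeasure Q
  S : Finset ℝ
  hS : ∀ s ∈ S, 0 ≤ s ∧ s ≤ 1
  p : Fin m → Ω → ℝ
  p_meas : ∀ j, Measurable (p j)
  p_mem : ∀ j w, p j w ∈ S
  I : Finset (Fin m)
  G : Finset (Ω ≃ᵐ Ω)
  G_one : MeasurableEquiv.refl Ω ∈ G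
  G_mul : ∀ g ∈ G, ∀ g' ∈ G, g.trans g' ∈ G
  G_inv : ∀ g ∈ G, g.symm ∈ G
  B : ℕ
  B_pos : 0 < B
  A : Fin B → Finset (Fin m)
  A_disj : ∀ b b', b ≠ b' → Disjoint (A b) (A b')
  A_cover : ∀ j, ∃ b, j ∈ A b
  A_I : ∀ b, (A b ∩ I).Nonempty

attribute [instance] Framework.meas Framework.Qprob

open MeasureTheory ProbabilityTheory Filter

namespace Framework

variable {m : ℕ} (F : Framework m)

/-- Minimum of the `p`-values over the index set `J` (`1` by convention if `J = ∅`). -/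
def fmin (J : Finset (Fin m)) (w : F.Ω) : ℝ :=
  if h : J.Nonempty then J.inf' h (fun j => F.p j w) else 1

/-- `min_{j ∈ I} p_j(w)`, the minimal `p`-value over the true null hypotheses. -/
def nullMin : F.Ω → ℝ := F.fmin F.I

/-- `min_{1 ≤ j ≤ m} p_j(w)`, the minimal `p`-value over all hypotheses. -/
def fullMin : F.Ω → ℝ := F.fmin Finset.univ

/-- `p^(b)(w) = min_{j ∈ A_b ∩ I} p_j(w)`, the minimal null `p`-value in block `b`. -/
def blockMin (b : Fin F.B) : F.Ω → ℝ := F.fmin (F.A b ∩ F.I)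

/-- The permutation probability `P*(E)(w) = |G|⁻¹ ∑_{g ∈ G} 1{g w ∈ E}`. -/
def Pstar (E : Set F.Ω) (w : F.Ω) : ℝ :=
  (F.G.card : ℝ)⁻¹ * ∑ g ∈ F.G, E.indicator (fun _ => (1 : ℝ)) (g w)

/-- The oracle threshold `c(α) = max {s ∈ S : Q(min_{j ∈ I} p_j(W) ≤ s) ≤ α}`,
with `max ∅ := 0`. -/
def oracle (α : ℝ) : ℝ :=
  WithBot.unbotD 0 ((F.S.filter (fun s => (F.Q {w | F.nullMin w ≤ s}).toReal ≤ α)).max)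

/-- The single-step Westfall--Young threshold
`ĉ(α)(w) = max {s ∈ S : P*(min_{1≤j≤m} p_j(W) ≤ s)(w) ≤ α}`, with `max ∅ := 0`. -/
def wy (α : ℝ) (w : F.Ω) : ℝ :=
  WithBot.unbotD 0 ((F.S.filter (fun s => F.Pstar {w' | F.fullMin w' ≤ s} w ≤ α)).max)

/-- The maximal block size `m_B = max_b |A_b|`. -/
def mB : ℕ := Finset.univ.sup (fun b : Fin F.B => (F.A b).card)

/-- `π_b(c) = Q(p^(b)(W) ≤ c)`. -/
def piB (b : Fin F.B) (c : ℝ) : ℝ := (F.Q {w | F.blockMin b w ≤ c}).toReal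

/-- Assumption (A1): for every pair `g, g' ∈ G`, the random variables
`min (p^(b)(gW)) (p^(b)(g'W))`, `b = 1, …, B`, are mutually independent under `Q`. -/
def A1 : Prop :=
  ∀ g ∈ F.G, ∀ g' ∈ F.G,
    iIndepFun
      (fun b : Fin F.B => fun w => min (F.blockMin b (g w)) (F.blockMin b (g' w))) F.Q

/-- Assumption (B1): for `G` uniformly distributed on the permutation group and independent
of `W`, the joint distribution of `(p_j(GW))_{j ∈ I}` equals that of `(p_j(W))_{j ∈ I}`;
expressed as an equality between the uniform mixture of the pushforwards and the
pushforward of `Q` itself. -/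
def B1 : Prop :=
  (F.G.card : ℝ≥0∞)⁻¹ •
      (∑ g ∈ F.G, Measure.map (fun w => fun j : F.I => F.p j (g w)) F.Q)
    = Measure.map (fun w => fun j : F.I => F.p j w) F.Q

/-- Assumption (B2) with constant `r`:
`r⁻¹ s ≤ P*(p_j(W) ≤ s)(w) ≤ r s` for all `j`, all `s ∈ S` and all `w`. -/
def B2 (r : ℝ) : Prop :=
  ∀ j : Fin m, ∀ s ∈ F.S, ∀ w : F.Ω,
    r⁻¹ * s ≤ F.Pstar {w' | F.p j w' ≤ s} w ∧ F.Pstar {w' | F.p j w' ≤ s} w ≤ r * s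

/-- Assumption (B3): null `p`-values are uniformly distributed on `S`:
`Q(p_j(W) ≤ s) = s` for all `j ∈ I`, `s ∈ S`. -/
def B3 : Prop :=
  ∀ j ∈ F.I, ∀ s ∈ F.S, (F.Q {w | F.p j w ≤ s}).toReal = s

end Framework

/-
Write `c = c(α)` and `π_b = Q(p^(b)(W) ≤ c)`. Taking `g = g' = id` in (A1) makes the block minima
independent, so `1 - α ≤ Q(c < min_I p) = ∏_b (1 - π_b) ≤ exp (-∑_b π_b)`. Integrating the lower
bound of (B2) over `W` and using (B1) gives `π_b ≥ r⁻¹ c`, hence `c ≤ r log (1/(1-α)) / B`.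
A union bound over the null hypotheses of block `b` and the upper bound of (B2) then give
`1 - μ_b(w) = P*(p^(b) ≤ c)(w) ≤ m_B r c`.
-/

lemma Finset.sum_le_log_inv_of_one_sub_le_prod {ι : Type*} (s : Finset ι) {x : ι → ℝ}
    (hx : ∀ i ∈ s, x i ≤ 1) {α : ℝ} (hα : α < 1) (h : 1 - α ≤ ∏ i ∈ s, (1 - x i)) :
    ∑ i ∈ s, x i ≤ Real.log (1 / (1 - α)) := by
  have hexp : 1 - α ≤ Real.exp (-∑ i ∈ s, x i) :=
    calc 1 - α ≤ ∏ i ∈ s, (1 - x i) := h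
      _ ≤ ∏ i ∈ s, Real.exp (-x i) :=
        Finset.prod_le_prod (fun i hi => by linarith [hx i hi])
          fun i _ => Real.one_sub_le_exp_neg (x i)
      _ = Real.exp (-∑ i ∈ s, x i) := by
        rw [← Real.exp_sum, Finset.sum_neg_distrib]
  rw [one_div, Real.log_inv, le_neg]
  simpa using Real.log_le_log (by linarith) hexp

namespace Framework

variable {m : ℕ} (F : Framework m)

lemma G_card_pos : 0 < F.G.card := Finset.card_pos.2 ⟨_, F.G_one⟩

@[simp]
lemma Pstar_empty (w : F.Ω) : F.Pstar ∅ w = 0 := by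
  simp [Pstar]

lemma Pstar_le_one (E : Set F.Ω) (w : F.Ω) : F.Pstar E w ≤ 1 := by
  have hsum : ∑ g ∈ F.G, E.indicator (fun _ => (1 : ℝ)) (g w) ≤ F.G.card := by
    simpa using Finset.sum_le_card_nsmul F.G (fun g => E.indicator (fun _ => (1 : ℝ)) (g w)) 1
      fun g _ => Set.indicator_apply_le' (fun _ => le_rfl) (fun _ => zero_le_one)
  rw [Pstar, inv_mul_le_one₀ (by exact_mod_cast F.G_card_pos)]
  exact hsum

lemma Pstar_compl (E : Set F.Ω) (w : F.Ω) : F.Pstar Eᶜ w = 1 - F.Pstar E w := by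
  have hG : (F.G.card : ℝ) ≠ 0 := by exact_mod_cast F.G_card_pos.ne'
  simp only [Pstar, Set.indicator_compl, Pi.sub_apply, Finset.sum_sub_distrib,
    Finset.sum_const, nsmul_eq_mul, mul_sub, mul_one, inv_mul_cancel₀ hG]

lemma Pstar_biUnion_le {ι : Type*} (J : Finset ι) (E : ι → Set F.Ω) (w : F.Ω) :
    F.Pstar (⋃ j ∈ J, E j) w ≤ ∑ j ∈ J, F.Pstar (E j) w := by
  have hind : ∀ x, (⋃ j ∈ J, E j).indicator (fun _ => (1 : ℝ)) x
      ≤ ∑ j ∈ J, (E j).indicator (fun _ => (1 : ℝ)) x := by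
    intro x
    by_cases hx : x ∈ ⋃ j ∈ J, E j
    · obtain ⟨j, hj, hxj⟩ := Set.mem_iUnion₂.1 hx
      rw [Set.indicator_of_mem hx]
      exact (Set.indicator_of_mem hxj _).symm.le.trans <|
        Finset.single_le_sum (fun j _ => Set.indicator_nonneg (fun _ _ => zero_le_one) x) hj
    · rw [Set.indicator_of_notMem hx]
      exact Finset.sum_nonneg fun j _ => Set.indicator_nonneg (fun _ _ => zero_le_one) x
  simp only [Pstar, ← Finset.mul_sum]
  rw [Finset.sum_comm]
  gcongr with g
  exact hind (g w)

lemma Pstar_eq_sum_indicator_preimage (E : Set F.Ω) :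
    F.Pstar E = fun w => (F.G.card : ℝ)⁻¹ * ∑ g ∈ F.G, (g ⁻¹' E).indicator 1 w := by
  ext w
  simp only [Pstar, ← Set.indicator_comp_right]
  rfl

lemma integrable_indicator_preimage {E : Set F.Ω} (hE : MeasurableSet E) (g : F.Ω ≃ᵐ F.Ω) :
    Integrable ((g ⁻¹' E).indicator (1 : F.Ω → ℝ)) F.Q :=
  (integrable_const (1 : ℝ)).indicator (g.measurable hE)

lemma integrable_Pstar {E : Set F.Ω} (hE : MeasurableSet E) : Integrable (F.Pstar E) F.Q := by
  rw [Pstar_eq_sum_indicator_preimage]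
  exact (integrable_finsetSum _ fun g _ => F.integrable_indicator_preimage hE g).const_mul _

lemma integral_Pstar {E : Set F.Ω} (hE : MeasurableSet E) :
    ∫ w, F.Pstar E w ∂F.Q = (F.G.card : ℝ)⁻¹ * ∑ g ∈ F.G, F.Q.real (g ⁻¹' E) := by
  rw [Pstar_eq_sum_indicator_preimage, integral_const_mul,
    integral_finsetSum _ fun g _ => F.integrable_indicator_preimage hE g]
  congr 1
  exact Finset.sum_congr rfl fun g _ => integral_indicator_one (g.measurable hE)

lemma fmin_le_iff {J : Finset (Fin m)} (hJ : J.Nonempty) (w : F.Ω) (c : ℝ) :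
    F.fmin J w ≤ c ↔ ∃ j ∈ J, F.p j w ≤ c := by
  rw [fmin, dif_pos hJ, Finset.inf'_le_iff]

lemma setOf_fmin_le {J : Finset (Fin m)} (hJ : J.Nonempty) (c : ℝ) :
    {w | F.fmin J w ≤ c} = ⋃ j ∈ J, {w | F.p j w ≤ c} := by
  ext w
  simp [F.fmin_le_iff hJ]

lemma measurableSet_fmin_le {J : Finset (Fin m)} (hJ : J.Nonempty) (c : ℝ) :
    MeasurableSet {w | F.fmin J w ≤ c} := by
  rw [F.setOf_fmin_le hJ]
  exact J.measurableSet_biUnion fun j _ => measurableSet_le (F.p_meas j) measurable_const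

lemma I_nonempty : F.I.Nonempty :=
  (F.A_I ⟨0, F.B_pos⟩).mono Finset.inter_subset_right

lemma nullMin_le_iff (w : F.Ω) (c : ℝ) : F.nullMin w ≤ c ↔ ∃ b, F.blockMin b w ≤ c := by
  simp only [nullMin, blockMin, F.fmin_le_iff F.I_nonempty, F.fmin_le_iff (F.A_I _),
    Finset.mem_inter]
  constructor
  · rintro ⟨j, hj, hjc⟩
    obtain ⟨b, hb⟩ := F.A_cover j
    exact ⟨b, j, ⟨hb, hj⟩, hjc⟩
  · rintro ⟨b, j, ⟨_, hj⟩, hjc⟩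
    exact ⟨j, hj, hjc⟩

lemma card_inter_I_le_mB (b : Fin F.B) : (F.A b ∩ F.I).card ≤ F.mB :=
  (Finset.card_le_card Finset.inter_subset_left).trans <|
    Finset.le_sup (f := fun b => (F.A b).card) (Finset.mem_univ b)

lemma oracle_mem_or_eq_zero (α : ℝ) :
    (F.oracle α ∈ F.S ∧ F.Q.real {w | F.nullMin w ≤ F.oracle α} ≤ α) ∨ F.oracle α = 0 := by
  rcases (F.S.filter fun s => (F.Q {w | F.nullMin w ≤ s}).toReal ≤ α).eq_empty_or_nonempty
    with h | h
  · right
    rw [oracle, h]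
    rfl
  · left
    rw [oracle, ← Finset.coe_max' h, WithBot.unbotD_coe]
    exact Finset.mem_filter.1 (Finset.max'_mem _ h)

variable {F} {r : ℝ}

lemma B1.measureReal_preimage_eq_integral_Pstar (hB1 : F.B1) {T : Set (F.I → ℝ)}
    (hT : MeasurableSet T) :
    F.Q.real ((fun w (j : F.I) => F.p j w) ⁻¹' T)
      = ∫ w, F.Pstar ((fun w (j : F.I) => F.p j w) ⁻¹' T) w ∂F.Q := by
  have hφ : Measurable fun w (j : F.I) => F.p j w := measurable_pi_lambda _ fun j => F.p_meas j
  have hmap : ∀ g : F.Ω ≃ᵐ F.Ω, Measure.map (fun w (j : F.I) => F.p j (g w)) F.Q T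
      = F.Q (g ⁻¹' ((fun w (j : F.I) => F.p j w) ⁻¹' T)) :=
    fun g => Measure.map_apply (hφ.comp g.measurable) hT
  have hmix := congrArg (fun μ => (μ T).toReal) hB1
  simp only [Measure.smul_apply, Measure.coe_finsetSum, Finset.sum_apply, smul_eq_mul,
    Measure.map_apply hφ hT, hmap, ENNReal.toReal_mul, ENNReal.toReal_inv,
    ENNReal.toReal_natCast, ENNReal.toReal_sum fun g _ => measure_ne_top _ _] at hmix
  rw [F.integral_Pstar (hφ hT)]
  exact hmix.symm

lemma B2.pos (hB2 : F.B2 r) : 0 < r := by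
  obtain ⟨w⟩ := nonempty_of_isProbabilityMeasure F.Q
  obtain ⟨j, -⟩ := F.A_I ⟨0, F.B_pos⟩
  set s := F.p j w
  have hs : 0 ≤ s := (F.hS s (F.p_mem j w)).1
  have hpos : 0 < F.Pstar {w' | F.p j w' ≤ s} w := by
    refine mul_pos (inv_pos.2 (by exact_mod_cast F.G_card_pos)) <| Finset.sum_pos'
      (fun g _ => Set.indicator_nonneg (fun _ _ => zero_le_one) _) ⟨_, F.G_one, ?_⟩
    simp [s]
  by_contra! hr
  nlinarith [(hB2 j s (F.p_mem j w) w).2]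

lemma inv_mul_le_measureReal_p_le (hB1 : F.B1) (hB2 : F.B2 r) {j : Fin m} (hj : j ∈ F.I)
    {s : ℝ} (hs : s ∈ F.S) : r⁻¹ * s ≤ F.Q.real {w | F.p j w ≤ s} := by
  have hT : MeasurableSet {f : F.I → ℝ | f ⟨j, hj⟩ ≤ s} :=
    measurableSet_le (measurable_pi_apply _) measurable_const
  have hmeas : MeasurableSet {w | F.p j w ≤ s} := measurableSet_le (F.p_meas j) measurable_const
  calc r⁻¹ * s = ∫ _, r⁻¹ * s ∂F.Q := by simp
    _ ≤ ∫ w, F.Pstar {w' | F.p j w' ≤ s} w ∂F.Q :=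
      integral_mono (integrable_const _) (F.integrable_Pstar hmeas) fun w => (hB2 j s hs w).1
    _ = F.Q.real {w | F.p j w ≤ s} := (hB1.measureReal_preimage_eq_integral_Pstar hT).symm

lemma inv_mul_le_measureReal_blockMin_le (hB1 : F.B1) (hB2 : F.B2 r) (b : Fin F.B)
    {s : ℝ} (hs : s ∈ F.S) : r⁻¹ * s ≤ F.Q.real {w | F.blockMin b w ≤ s} := by
  obtain ⟨j, hj⟩ := F.A_I b
  refine (inv_mul_le_measureReal_p_le hB1 hB2 (Finset.mem_inter.1 hj).2 hs).trans <|
    measureReal_mono fun w hw => ?_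
  exact (F.fmin_le_iff (F.A_I b) w s).2 ⟨j, hj, hw⟩

lemma A1.iIndepFun_blockMin (hA1 : F.A1) : iIndepFun F.blockMin F.Q := by
  simpa using hA1 _ F.G_one _ F.G_one

lemma A1.measureReal_lt_nullMin_eq_prod (hA1 : F.A1) (c : ℝ) :
    F.Q.real {w | c < F.nullMin w} = ∏ b, F.Q.real {w | c < F.blockMin b w} := by
  have hinter : {w | c < F.nullMin w} = ⋂ b ∈ Finset.univ, F.blockMin b ⁻¹' Set.Ioi c := by
    ext w
    simp [← not_le, F.nullMin_le_iff]
  rw [hinter, measureReal_def, hA1.iIndepFun_blockMin.measure_inter_preimage_eq_mul _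
    fun _ _ => measurableSet_Ioi, ENNReal.toReal_prod]
  rfl

lemma A1.sum_measureReal_blockMin_le (hA1 : F.A1) {α s : ℝ} (hα : α < 1)
    (hs : F.Q.real {w | F.nullMin w ≤ s} ≤ α) :
    ∑ b, F.Q.real {w | F.blockMin b w ≤ s} ≤ Real.log (1 / (1 - α)) := by
  have hcompl : ∀ f : F.Ω → ℝ, MeasurableSet {w | f w ≤ s} →
      F.Q.real {w | s < f w} = 1 - F.Q.real {w | f w ≤ s} := fun f hf => by
    simpa only [Set.compl_ofPred, not_le] using probReal_compl_eq_one_sub (μ := F.Q) hf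
  refine Finset.univ.sum_le_log_inv_of_one_sub_le_prod (fun b _ => measureReal_le_one) hα ?_
  calc 1 - α ≤ F.Q.real {w | s < F.nullMin w} := by
        rw [hcompl F.nullMin (F.measurableSet_fmin_le F.I_nonempty s)]
        linarith
    _ = ∏ b, (1 - F.Q.real {w | F.blockMin b w ≤ s}) := by
        rw [hA1.measureReal_lt_nullMin_eq_prod]
        exact Finset.prod_congr rfl fun b _ =>
          hcompl (F.blockMin b) (F.measurableSet_fmin_le (F.A_I b) s)

lemma le_of_measureReal_nullMin_le (hA1 : F.A1) (hB1 : F.B1) (hB2 : F.B2 r) {α s : ℝ}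
    (hα : α < 1) (hs : s ∈ F.S) (hsα : F.Q.real {w | F.nullMin w ≤ s} ≤ α) :
    s ≤ r * Real.log (1 / (1 - α)) / F.B := by
  have hB : (0 : ℝ) < F.B := by exact_mod_cast F.B_pos
  have hsum : F.B * (r⁻¹ * s) ≤ Real.log (1 / (1 - α)) :=
    calc F.B * (r⁻¹ * s) = ∑ _b : Fin F.B, r⁻¹ * s := by simp
      _ ≤ ∑ b, F.Q.real {w | F.blockMin b w ≤ s} :=
        Finset.sum_le_sum fun b _ => inv_mul_le_measureReal_blockMin_le hB1 hB2 b hs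
      _ ≤ _ := hA1.sum_measureReal_blockMin_le hα hsα
  rw [le_div_iff₀ hB]
  have hr := hB2.pos
  calc s * F.B = r * (F.B * (r⁻¹ * s)) := by field_simp
    _ ≤ _ := by gcongr

lemma oracle_le (hA1 : F.A1) (hB1 : F.B1) (hB2 : F.B2 r) {α : ℝ} (hα : α ∈ Set.Ioo 0 1) :
    F.oracle α ≤ r * Real.log (1 / (1 - α)) / F.B := by
  rcases F.oracle_mem_or_eq_zero α with ⟨hS, hQ⟩ | h0
  · exact le_of_measureReal_nullMin_le hA1 hB1 hB2 hα.2 hS hQ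
  · have hL : 0 ≤ Real.log (1 / (1 - α)) :=
      Real.log_nonneg (by rw [le_div_iff₀ (by linarith [hα.2])]; linarith [hα.1])
    rw [h0]
    have := hB2.pos
    positivity

lemma Pstar_setOf_p_le_le (hB2 : F.B2 r) {c : ℝ} (hc : c ∈ F.S ∨ c = 0) (j : Fin m) (w : F.Ω) :
    F.Pstar {w' | F.p j w' ≤ c} w ≤ r * c := by
  by_cases hcS : c ∈ F.S
  · exact (hB2 j c hcS w).2
  · obtain rfl : c = 0 := hc.resolve_left hcS
    have hempty : {w' | F.p j w' ≤ 0} = ∅ := by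
      refine Set.eq_empty_of_forall_notMem fun w' hw' => hcS ?_
      have h0 : F.p j w' = 0 := le_antisymm hw' (F.hS _ (F.p_mem j w')).1
      exact h0 ▸ F.p_mem j w'
    simp [hempty]

lemma Pstar_setOf_blockMin_le_le (hB2 : F.B2 r) {c : ℝ} (hc : c ∈ F.S ∨ c = 0) (b : Fin F.B)
    (w : F.Ω) : F.Pstar {w' | F.blockMin b w' ≤ c} w ≤ F.mB * (r * c) := by
  have hrc : 0 ≤ r * c := mul_nonneg hB2.pos.le (hc.elim (fun h => (F.hS c h).1) ge_of_eq)
  calc F.Pstar {w' | F.blockMin b w' ≤ c} w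
      = F.Pstar (⋃ j ∈ F.A b ∩ F.I, {w' | F.p j w' ≤ c}) w := by
        rw [← F.setOf_fmin_le (F.A_I b)]
        rfl
    _ ≤ ∑ j ∈ F.A b ∩ F.I, F.Pstar {w' | F.p j w' ≤ c} w := F.Pstar_biUnion_le _ _ w
    _ ≤ (F.A b ∩ F.I).card • (r * c) :=
        Finset.sum_le_card_nsmul _ _ _ fun j _ => Pstar_setOf_p_le_le hB2 hc j w
    _ ≤ F.mB * (r * c) := by
        rw [nsmul_eq_mul]
        gcongr
        exact_mod_cast F.card_inter_I_le_mB b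

end Framework

/-- **Lemma 4 (support of the block permutation probabilities).** Under (A1), (B1) and
(B2) with constant `r`, for `α ∈ (0,1)` and `μ_b(w) = P*(p^(b)(W) > c(α))(w)`:
`1 − log(1/(1−α))·r²·m_B/B ≤ μ_b(w) ≤ 1` for every `w` and every block `b`. -/
theorem lemma4_support_block_permutation_prob
    {m : ℕ} (F : Framework m) (r : ℝ)
    (hA1 : F.A1) (hB1 : F.B1) (hB2 : F.B2 r)
    (α : ℝ) (hα : α ∈ Set.Ioo (0 : ℝ) 1) :
    ∀ (b : Fin F.B) (w : F.Ω),
      1 - Real.log (1 / (1 - α)) * r ^ 2 * (F.mB : ℝ) / (F.B : ℝ)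
          ≤ F.Pstar {w' | F.oracle α < F.blockMin b w'} w ∧
      F.Pstar {w' | F.oracle α < F.blockMin b w'} w ≤ 1 := by
  intro b w
  have hr := hB2.pos
  have hc := F.oracle_le hA1 hB1 hB2 hα
  have hP := F.Pstar_setOf_blockMin_le_le hB2 ((F.oracle_mem_or_eq_zero α).imp_left And.left) b w
  have hcompl : {w' | F.oracle α < F.blockMin b w'} = {w' | F.blockMin b w' ≤ F.oracle α}ᶜ := by
    simp only [Set.compl_ofPred, not_le]
  refine ⟨?_, F.Pstar_le_one _ w⟩
  rw [hcompl, F.Pstar_compl]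
  calc 1 - Real.log (1 / (1 - α)) * r ^ 2 * F.mB / F.B
      = 1 - F.mB * (r * (r * Real.log (1 / (1 - α)) / F.B)) := by ring
    _ ≤ 1 - F.mB * (r * F.oracle α) := by gcongr
    _ ≤ _ := by linarith
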